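/- arXiv:2502.00410 — 11 statements merged into one kernel-verified Lean document; each statement's English description precedes it below -/
import Mathlib

section
/- For Holling type I responses f_i(s) = α_i s, if θ₀ < θ < L where L = α₁β₁K₁ + α₂β₂K₂ and θ₀ = max{(1-α₁/α₂)α₁β₁K₁, (1-α₂/α₁)α₂β₂K₂}, then the point P* = (K₁[(α₂-α₁)L₂+α₁θ]/(α₁L₁+α₂L₂), K₂[(α₁-α₂)L₁+α₂θ]/(α₁L₁+α₂L₂), (L-θ)/(α₁L₁+α₂L₂)) with L₁ = α₁β₁K₁, L₂ = α₂β₂K₂ has all three coordinates strictly positive and satisfies the equilibrium equations 1 - u/K₁ - α₁w = 0, 1 - v/K₂ - α₂w = 0, α₁β₁u + α₂β₂v = θ. -/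
theorem stmt5 (K₁ K₂ α₁ α₂ β₁ β₂ θ : ℝ)
    (hK₁ : 0 < K₁) (hK₂ : 0 < K₂) (hα₁ : 0 < α₁) (hα₂ : 0 < α₂)
    (hβ₁ : 0 < β₁) (hβ₂ : 0 < β₂)
    (hθ₀ : max ((1 - α₁ / α₂) * (α₁ * β₁ * K₁)) ((1 - α₂ / α₁) * (α₂ * β₂ * K₂)) < θ)
    (hθL : θ < α₁ * β₁ * K₁ + α₂ * β₂ * K₂) :
    let L₁ := α₁ * β₁ * K₁
    let L₂ := α₂ * β₂ * K₂
    let D := α₁ * L₁ + α₂ * L₂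
    let u := K₁ * ((α₂ - α₁) * L₂ + α₁ * θ) / D
    let v := K₂ * ((α₁ - α₂) * L₁ + α₂ * θ) / D
    let w := (L₁ + L₂ - θ) / D
    0 < u ∧ 0 < v ∧ 0 < w ∧
    1 - u / K₁ - α₁ * w = 0 ∧ 1 - v / K₂ - α₂ * w = 0 ∧
    α₁ * β₁ * u + α₂ * β₂ * v = θ := by
  intro L₁ L₂ D u v w
  have h1 := lt_of_le_of_lt (le_max_left _ _) hθ₀
  have h2 := lt_of_le_of_lt (le_max_right _ _) hθ₀
  have hL₁ : 0 < L₁ := by positivity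
  have hL₂ : 0 < L₂ := by positivity
  have hD : 0 < D := by positivity
  have hu : 0 < (α₂ - α₁) * L₂ + α₁ * θ := by
    have h := mul_lt_mul_of_pos_left h2 hα₁
    have e : α₁ * ((1 - α₂ / α₁) * (α₂ * β₂ * K₂)) = (α₁ - α₂) * (α₂ * β₂ * K₂) := by
      field_simp
    rw [e] at h
    show 0 < (α₂ - α₁) * (α₂ * β₂ * K₂) + α₁ * θ
    linarith
  have hv : 0 < (α₁ - α₂) * L₁ + α₂ * θ := by
    have h := mul_lt_mul_of_pos_left h1 hα₂
    have e : α₂ * ((1 - α₁ / α₂) * (α₁ * β₁ * K₁)) = (α₂ - α₁) * (α₁ * β₁ * K₁) := by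
      field_simp
    rw [e] at h
    show 0 < (α₁ - α₂) * (α₁ * β₁ * K₁) + α₂ * θ
    linarith
  refine ⟨div_pos (mul_pos hK₁ hu) hD, div_pos (mul_pos hK₂ hv) hD, div_pos (by show (0:ℝ) < α₁ * β₁ * K₁ + (α₂ * β₂ * K₂) - θ; linarith : (0:ℝ) < L₁ + L₂ - θ) hD, ?_, ?_, ?_⟩
  · show 1 - K₁ * ((α₂ - α₁) * L₂ + α₁ * θ) / D / K₁ - α₁ * ((L₁ + L₂ - θ) / D) = 0
    field_simp
    ring
  · show 1 - K₂ * ((α₁ - α₂) * L₁ + α₂ * θ) / D / K₂ - α₂ * ((L₁ + L₂ - θ) / D) = 0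
    field_simp
    ring
  · show α₁ * β₁ * (K₁ * ((α₂ - α₁) * L₂ + α₁ * θ) / D) + α₂ * β₂ * (K₂ * ((α₁ - α₂) * L₁ + α₂ * θ) / D) = θ
    show α₁ * β₁ * (K₁ * ((α₂ - α₁) * L₂ + α₁ * θ) / D) + α₂ * β₂ * (K₂ * ((α₁ - α₂) * L₁ + α₂ * θ) / D) = θ
    field_simp
    show α₁ * β₁ * K₁ * ((α₂ - α₁) * (α₂ * β₂ * K₂) + α₁ * θ) + α₂ * β₂ * K₂ * ((α₁ - α₂) * (α₁ * β₁ * K₁) + α₂ * θ) = θ * (α₁ * (α₁ * β₁ * K₁) + α₂ * (α₂ * β₂ * K₂))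
    ring
end

section
/- Let f_i(s) = α_i s (Holling type I), and suppose θ₀ < θ < L so the coexistence equilibrium P* = (u*, v*, w*) exists. Then along any positive solution (u,v,w) of the system, the Lyapunov function E(t) = β₁(u - u* - u* ln(u/u*)) + β₂(v - v* - v* ln(v/v*)) + (w - w* - w* ln(w/w*)) satisfies E'(t) = -(β₁/K₁)(u-u*)² - (β₂/K₂)(v-v*)² ≤ 0. -/
theorem stmt6 (K₁ K₂ α₁ α₂ β₁ β₂ θ : ℝ)
    (hK₁ : 0 < K₁) (hK₂ : 0 < K₂) (hα₁ : 0 < α₁) (hα₂ : 0 < α₂)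
    (hβ₁ : 0 < β₁) (hβ₂ : 0 < β₂) (hθ : 0 < θ)
    (us vs ws : ℝ) (hus : 0 < us) (hvs : 0 < vs) (hws : 0 < ws)
    (he1 : 1 - us / K₁ = α₁ * ws) (he2 : 1 - vs / K₂ = α₂ * ws)
    (he3 : α₁ * β₁ * us + α₂ * β₂ * vs = θ)
    (u v w : ℝ → ℝ) (t : ℝ)
    (hu : 0 < u t) (hv : 0 < v t) (hw : 0 < w t)
    (hdu : HasDerivAt u (u t * (1 - u t / K₁) - α₁ * u t * w t) t)
    (hdv : HasDerivAt v (v t * (1 - v t / K₂) - α₂ * v t * w t) t)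
    (hdw : HasDerivAt w (w t * (α₁ * β₁ * u t + α₂ * β₂ * v t - θ)) t) :
    deriv (fun s => β₁ * (u s - us - us * Real.log (u s / us))
        + β₂ * (v s - vs - vs * Real.log (v s / vs))
        + (w s - ws - ws * Real.log (w s / ws))) t
      = -(β₁ / K₁) * (u t - us)^2 - (β₂ / K₂) * (v t - vs)^2 ∧
    deriv (fun s => β₁ * (u s - us - us * Real.log (u s / us))
        + β₂ * (v s - vs - vs * Real.log (v s / vs))
        + (w s - ws - ws * Real.log (w s / ws))) t ≤ 0 := by
  set u' := u t * (1 - u t / K₁) - α₁ * u t * w t with hu'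
  set v' := v t * (1 - v t / K₂) - α₂ * v t * w t with hv'
  set w' := w t * (α₁ * β₁ * u t + α₂ * β₂ * v t - θ) with hw'
  have hune : u t / us ≠ 0 := by positivity
  have hvne : v t / vs ≠ 0 := by positivity
  have hwne : w t / ws ≠ 0 := by positivity
  have h1 : HasDerivAt (fun s => β₁ * (u s - us - us * Real.log (u s / us)))
      (β₁ * (u' - us * ((u' / us) / (u t / us)))) t := by
    exact (((hdu.sub_const us).sub (((hdu.div_const us).log hune).const_mul us)).const_mul β₁)
  have h2 : HasDerivAt (fun s => β₂ * (v s - vs - vs * Real.log (v s / vs)))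
      (β₂ * (v' - vs * ((v' / vs) / (v t / vs)))) t := by
    exact (((hdv.sub_const vs).sub (((hdv.div_const vs).log hvne).const_mul vs)).const_mul β₂)
  have h3 : HasDerivAt (fun s => w s - ws - ws * Real.log (w s / ws))
      (w' - ws * ((w' / ws) / (w t / ws))) t := by
    exact ((hdw.sub_const ws).sub (((hdw.div_const ws).log hwne).const_mul ws))
  have hE := ((h1.add h2).add h3)
  have hde : deriv (fun s => β₁ * (u s - us - us * Real.log (u s / us))
        + β₂ * (v s - vs - vs * Real.log (v s / vs))
        + (w s - ws - ws * Real.log (w s / ws))) t = _ := hE.deriv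
  rw [hde]
  have key : β₁ * (u' - us * ((u' / us) / (u t / us)))
      + β₂ * (v' - vs * ((v' / vs) / (v t / vs)))
      + (w' - ws * ((w' / ws) / (w t / ws)))
      = -(β₁ / K₁) * (u t - us)^2 - (β₂ / K₂) * (v t - vs)^2 := by
    have e1 : u' - us * ((u' / us) / (u t / us)) = (u t - us) * (1 - u t / K₁ - α₁ * w t) := by
      rw [hu']; field_simp
    have e2 : v' - vs * ((v' / vs) / (v t / vs)) = (v t - vs) * (1 - v t / K₂ - α₂ * w t) := by
      rw [hv']; field_simp
    have e3 : w' - ws * ((w' / ws) / (w t / ws))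
        = (w t - ws) * (α₁ * β₁ * u t + α₂ * β₂ * v t - θ) := by
      rw [hw']; field_simp
    rw [e1, e2, e3]
    linear_combination β₁ * (u t - us) * he1 + β₂ * (v t - vs) * he2 + (w t - ws) * he3
  constructor
  · exact key
  · rw [key]
    nlinarith [mul_nonneg (le_of_lt (div_pos hβ₁ hK₁)) (sq_nonneg (u t - us)),
      mul_nonneg (le_of_lt (div_pos hβ₂ hK₂)) (sq_nonneg (v t - vs))]
end

section
/- The parameter sets Λ₁ = {(K₁,K₂) : K₁ ≤ λ₁ + u_{Q₁}, K₂/f₂(K₂) ≤ w_{Q₁}} and Λ₂ = {(K₁,K₂) : K₂ ≤ λ₂ + v_{Q₂}, K₁/f₁(K₁) ≤ w_{Q₂}} are disjoint. More precisely, if γ₁ ≥ γ₂ then Λ₁ = ∅, and if γ₁ ≤ γ₂ then Λ₂ = ∅. -/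
open Set

lemma stmt9_aux (β γ γ' h h' θ K K' : ℝ)
    (hβ : 0 < β) (hγ : 0 < γ) (hγ' : 0 < γ') (hh : 0 < h) (hh' : 0 < h')
    (hθ : 0 < θ) (hK : 0 < K) (hK' : 0 < K')
    (h1 : θ < β * (γ * K / (1 + γ * h * K)))
    (h2 : K ≤ 1 / (γ * h) + θ / ((β - h * θ) * γ))
    (h3 : K' / (γ' * K' / (1 + γ' * h' * K')) ≤
      β * (β * (γ * K / (1 + γ * h * K)) - θ) /
        (γ * (γ * K / (1 + γ * h * K)) * (β - h * θ)^2)) :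
    γ < γ' := by
  have hD : 0 < 1 + γ * h * K := by positivity
  have hD' : 0 < 1 + γ' * h' * K' := by positivity
  set x := γ * K / (1 + γ * h * K) with hxdef
  have hx : 0 < x := by positivity
  have hxD : x * (1 + γ * h * K) = γ * K := by
    rw [hxdef, div_mul_cancel₀ _ hD.ne']
  have h4 : h * x * (1 + γ * h * K) = h * (γ * K) := by rw [mul_assoc, hxD]
  have hxh : h * x < 1 := by nlinarith [h4, hD]
  have hc : 0 < β - h * θ := by nlinarith
  have h2' : γ * h * K * (β - h * θ) ≤ β := by
    rw [div_add_div _ _ (by positivity) (by positivity), le_div_iff₀ (by positivity)] at h2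
    nlinarith
  have hED : (x * (β - h * θ)^2 - β * (β * x - θ)) * (1 + γ * h * K)
      = θ * (β - γ * h * K * (β - h * θ)) := by
    linear_combination ((β - h * θ)^2 - β^2) * hxD
  have key : β * (β * x - θ) ≤ x * (β - h * θ)^2 := by
    nlinarith [hED, hD, mul_le_mul_of_nonneg_left h2' hθ.le]
  have hrhs : β * (β * x - θ) / (γ * x * (β - h * θ)^2) ≤ 1 / γ := by
    rw [div_le_div_iff₀ (by positivity) hγ]
    nlinarith [key, hγ]
  have hlhs : K' / (γ' * K' / (1 + γ' * h' * K')) = (1 + γ' * h' * K') / γ' := by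
    field_simp
  have hgt : 1 / γ' < K' / (γ' * K' / (1 + γ' * h' * K')) := by
    rw [hlhs, div_lt_div_iff₀ hγ' hγ']
    nlinarith [mul_pos (mul_pos (mul_pos hγ' hh') hK') hγ']
  have hfin : 1 / γ' < 1 / γ := lt_of_lt_of_le hgt (h3.trans hrhs)
  rw [div_lt_div_iff₀ hγ' hγ] at hfin
  linarith

theorem stmt9 (β₁ β₂ γ₁ γ₂ h₁ h₂ θ : ℝ)
    (hβ₁ : 0 < β₁) (hβ₂ : 0 < β₂) (hγ₁ : 0 < γ₁) (hγ₂ : 0 < γ₂)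
    (hh₁ : 0 < h₁) (hh₂ : 0 < h₂) (hθ : 0 < θ) :
    let f₁ : ℝ → ℝ := fun s => γ₁ * s / (1 + γ₁ * h₁ * s)
    let f₂ : ℝ → ℝ := fun s => γ₂ * s / (1 + γ₂ * h₂ * s)
    let lam₁ := 1 / (γ₁ * h₁)
    let lam₂ := 1 / (γ₂ * h₂)
    let uQ₁ := θ / ((β₁ - h₁ * θ) * γ₁)
    let vQ₂ := θ / ((β₂ - h₂ * θ) * γ₂)
    let wQ₁ : ℝ → ℝ := fun K₁ => β₁ * (β₁ * f₁ K₁ - θ) / (γ₁ * f₁ K₁ * (β₁ - h₁ * θ)^2)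
    let wQ₂ : ℝ → ℝ := fun K₂ => β₂ * (β₂ * f₂ K₂ - θ) / (γ₂ * f₂ K₂ * (β₂ - h₂ * θ)^2)
    let Λ₁ : Set (ℝ × ℝ) := {p | 0 < p.1 ∧ 0 < p.2 ∧ θ < β₁ * f₁ p.1 ∧
      p.1 ≤ lam₁ + uQ₁ ∧ p.2 / f₂ p.2 ≤ wQ₁ p.1}
    let Λ₂ : Set (ℝ × ℝ) := {p | 0 < p.1 ∧ 0 < p.2 ∧ θ < β₂ * f₂ p.2 ∧
      p.2 ≤ lam₂ + vQ₂ ∧ p.1 / f₁ p.1 ≤ wQ₂ p.2}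
    (γ₂ ≤ γ₁ → Λ₁ = ∅) ∧ (γ₁ ≤ γ₂ → Λ₂ = ∅) ∧ Λ₁ ∩ Λ₂ = ∅ := by
  intro f₁ f₂ lam₁ lam₂ uQ₁ vQ₂ wQ₁ wQ₂ Λ₁ Λ₂
  have key₁ : ∀ p ∈ Λ₁, γ₁ < γ₂ := by
    rintro p ⟨hp1, hp2, hp3, hp4, hp5⟩
    exact stmt9_aux β₁ γ₁ γ₂ h₁ h₂ θ p.1 p.2 hβ₁ hγ₁ hγ₂ hh₁ hh₂ hθ hp1 hp2 hp3 hp4 hp5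
  have key₂ : ∀ p ∈ Λ₂, γ₂ < γ₁ := by
    rintro p ⟨hp1, hp2, hp3, hp4, hp5⟩
    exact stmt9_aux β₂ γ₂ γ₁ h₂ h₁ θ p.2 p.1 hβ₂ hγ₂ hγ₁ hh₂ hh₁ hθ hp2 hp1 hp3 hp4 hp5
  refine ⟨fun hle => ?_, fun hle => ?_, ?_⟩
  · rw [eq_empty_iff_forall_notMem]
    exact fun p hp => absurd (key₁ p hp) (not_lt.2 hle)
  · rw [eq_empty_iff_forall_notMem]
    exact fun p hp => absurd (key₂ p hp) (not_lt.2 hle)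
  · rw [eq_empty_iff_forall_notMem]
    rintro p ⟨hp1, hp2⟩
    exact absurd (key₁ p hp1) (not_lt.2 (key₂ p hp2).le)
end

section
/- The sets Λ₂ = {(K₁,K₂) : K₂ ≤ λ₂ + v_{Q₂}, K₁/f₁(K₁) ≤ w_{Q₂}} and Λ* = {(K₁,K₂) : K₁ ≤ λ₁ + u*, K₂ ≤ λ₂ + v*} are disjoint, where (u*, v*, w*) is any coexistence equilibrium. -/
set_option maxHeartbeats 1000000 in
theorem stmt10 (K₁ K₂ β₁ β₂ γ₁ γ₂ h₁ h₂ θ : ℝ)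
    (hK₁ : 0 < K₁) (hK₂ : 0 < K₂) (hβ₁ : 0 < β₁) (hβ₂ : 0 < β₂)
    (hγ₁ : 0 < γ₁) (hγ₂ : 0 < γ₂) (hh₁ : 0 < h₁) (hh₂ : 0 < h₂) (hθ : 0 < θ)
    (v₂ w₂ us vs ws : ℝ) (hv₂ : 0 < v₂)
    (hus : 0 < us) (hvs : 0 < vs) (hws : 0 < ws) :
    let f₁ : ℝ → ℝ := fun s => γ₁ * s / (1 + γ₁ * h₁ * s)
    let f₂ : ℝ → ℝ := fun s => γ₂ * s / (1 + γ₂ * h₂ * s)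
    let lam₁ := 1 / (γ₁ * h₁)
    let lam₂ := 1 / (γ₂ * h₂)
    -- Q₂ = (0, v₂, w₂) is the semi-coexistence equilibrium
    θ = β₂ * f₂ v₂ →
    w₂ = (v₂ / f₂ v₂) * (1 - v₂ / K₂) →
    -- (us, vs, ws) is a coexistence equilibrium
    θ = β₁ * f₁ us + β₂ * f₂ vs →
    ws = (us / f₁ us) * (1 - us / K₁) →
    ws = (vs / f₂ vs) * (1 - vs / K₂) →
    ¬((K₂ ≤ lam₂ + v₂ ∧ K₁ / f₁ K₁ ≤ w₂) ∧ (K₁ ≤ lam₁ + us ∧ K₂ ≤ lam₂ + vs)) := by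
  intro f₁ f₂ lam₁ lam₂ hθ2 hw₂ hθs hws1 hws2
  rintro ⟨⟨hΛ1, hΛ2⟩, hΛ3, hΛ4⟩
  simp only [f₁, f₂, lam₁, lam₂] at *
  have dv₂ : 0 < 1 + γ₂ * h₂ * v₂ := by positivity
  have dvs : 0 < 1 + γ₂ * h₂ * vs := by positivity
  have dus : 0 < 1 + γ₁ * h₁ * us := by positivity
  have dK₁ : 0 < 1 + γ₁ * h₁ * K₁ := by positivity
  -- f₁ us > 0
  have hf₁us : 0 < γ₁ * us / (1 + γ₁ * h₁ * us) := by positivity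
  have hf₂vs : 0 < γ₂ * vs / (1 + γ₂ * h₂ * vs) := by positivity
  have hf₂v₂ : 0 < γ₂ * v₂ / (1 + γ₂ * h₂ * v₂) := by positivity
  -- f₂ vs < f₂ v₂
  have hflt : γ₂ * vs / (1 + γ₂ * h₂ * vs) < γ₂ * v₂ / (1 + γ₂ * h₂ * v₂) := by
    nlinarith [hθ2, hθs, mul_pos hβ₁ hf₁us]
  -- vs < v₂
  have hvlt : vs < v₂ := by
    rw [div_lt_div_iff₀ dvs dv₂] at hflt
    nlinarith
  -- clear denominators in equilibrium equations
  have e1 : ws * (γ₁ * K₁) = (1 + γ₁ * h₁ * us) * (K₁ - us) := by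
    rw [hws1]; field_simp
  have e2 : w₂ * (γ₂ * K₂) = (1 + γ₂ * h₂ * v₂) * (K₂ - v₂) := by
    rw [hw₂]; field_simp
  have e3 : ws * (γ₂ * K₂) = (1 + γ₂ * h₂ * vs) * (K₂ - vs) := by
    rw [hws2]; field_simp
  -- us < K₁
  have husK : us < K₁ := by
    have hp : 0 < (1 + γ₁ * h₁ * us) * (K₁ - us) := by
      rw [← e1]; positivity
    nlinarith [hp, dus]
  -- K₁ / f₁ K₁ = (1 + γ₁ h₁ K₁)/γ₁
  have hKf : K₁ / (γ₁ * K₁ / (1 + γ₁ * h₁ * K₁)) = (1 + γ₁ * h₁ * K₁) / γ₁ := by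
    rw [div_div_eq_mul_div, div_eq_div_iff (by positivity) hγ₁.ne']
    ring
  rw [hKf] at hΛ2
  -- ws < K₁/f₁ K₁ ≤ w₂
  have hwsw₂ : ws < w₂ := by
    have : ws < (1 + γ₁ * h₁ * K₁) / γ₁ := by
      rw [lt_div_iff₀ hγ₁]
      nlinarith [e1, hK₁, hus, mul_pos (mul_pos hγ₁ hh₁) (mul_pos hK₁ (sub_pos.2 husK)),
        mul_pos (mul_pos hγ₁ hh₁) (mul_pos hus hus)]
    linarith
  -- final contradiction
  have hh : K₂ * (γ₂ * h₂) ≤ 1 + γ₂ * h₂ * vs := by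
    have h0 : 0 < γ₂ * h₂ := by positivity
    rw [div_add' _ _ _ h0.ne'] at hΛ4
    rw [le_div_iff₀ h0] at hΛ4
    linarith
  have key : (w₂ - ws) * (γ₂ * K₂) = (v₂ - vs) * ((γ₂ * h₂ * K₂ - 1) - γ₂ * h₂ * (v₂ + vs)) := by
    nlinarith [e2, e3]
  have hXneg : γ₂ * h₂ * K₂ - 1 - γ₂ * h₂ * (v₂ + vs) < 0 := by
    nlinarith [mul_pos (mul_pos hγ₂ hh₂) hv₂]
  have hprod : (v₂ - vs) * ((γ₂ * h₂ * K₂ - 1) - γ₂ * h₂ * (v₂ + vs)) < 0 :=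
    mul_neg_of_pos_of_neg (sub_pos.2 hvlt) hXneg
  nlinarith [mul_pos (sub_pos.2 hwsw₂) (mul_pos hγ₂ hK₂), key, hprod]
end

section
/- For the Holling type II system, suppose Q* = (u*, v*, w*) is a coexistence equilibrium with K₁ ≤ λ₁ + u* and K₂ ≤ λ₂ + v*. Then along any positive solution, the Lyapunov function E(t) = Γ₁(u - u* - u* ln(u/u*)) + Γ₂(v - v* - v* ln(v/v*)) + (w - w* - w* ln(w/w*)), with Γ₁ = β₁/(1+γ₁h₁u*) and Γ₂ = β₂/(1+γ₂h₂v*), satisfies E'(t) ≤ -(Γ₁h₁/K₁)f₁(u)(u-u*)² - (Γ₂h₂/K₂)f₂(v)(v-v*)². -/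
set_option maxHeartbeats 1000000

/-- Per-species key inequality. -/
lemma one_species (K β γ h x xs w ws : ℝ) (hK : 0 < K) (hβ : 0 < β) (hγ : 0 < γ)
    (hh : 0 < h) (hx : 0 < x) (hxs : 0 < xs)
    (heq : ws * γ = (1 + γ*h*xs) * (1 - xs/K))
    (hcond : K ≤ 1/(γ*h) + xs) :
    (β/(1+γ*h*xs)) * ((x-xs)/x) * (x*(1-x/K) - w*(γ*x/(1+γ*h*x)))
      + (w-ws)*β*(γ*x/(1+γ*h*x) - γ*xs/(1+γ*h*xs))
    ≤ -((β/(1+γ*h*xs))*h/K) * (γ*x/(1+γ*h*x)) * (x-xs)^2 := by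
  have hd : 0 < 1+γ*h*x := by positivity
  have hds : 0 < 1+γ*h*xs := by positivity
  have hws_val : ws = (1 + γ*h*xs) * (1 - xs/K) / γ := by
    field_simp at heq ⊢; linarith
  have hL : (β/(1+γ*h*xs)) * ((x-xs)/x) * (x*(1-x/K) - w*(γ*x/(1+γ*h*x)))
      + (w-ws)*β*(γ*x/(1+γ*h*x) - γ*xs/(1+γ*h*xs))
      = β*(x-xs)^2*(γ*h*(K-x-xs)-1)/((1+γ*h*xs)*((1+γ*h*x)*K)) := by
    rw [hws_val]; field_simp; ring
  have hR : -((β/(1+γ*h*xs))*h/K) * (γ*x/(1+γ*h*x)) * (x-xs)^2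
      = β*(x-xs)^2*(-(γ*h*x))/((1+γ*h*xs)*((1+γ*h*x)*K)) := by
    field_simp
  rw [hL, hR, div_le_div_iff_of_pos_right (by positivity)]
  have h1 : γ*h*(K-xs) ≤ 1 := by
    have h2 : K - xs ≤ 1/(γ*h) := by linarith
    calc γ*h*(K-xs) ≤ γ*h*(1/(γ*h)) := mul_le_mul_of_nonneg_left h2 (by positivity)
      _ = 1 := by field_simp
  have h3 : γ*h*(K-x-xs)-1 ≤ -(γ*h*x) := by nlinarith [h1]
  exact mul_le_mul_of_nonneg_left h3 (by positivity)

theorem stmt11 (K₁ K₂ β₁ β₂ γ₁ γ₂ h₁ h₂ θ : ℝ)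
    (hK₁ : 0 < K₁) (hK₂ : 0 < K₂) (hβ₁ : 0 < β₁) (hβ₂ : 0 < β₂)
    (hγ₁ : 0 < γ₁) (hγ₂ : 0 < γ₂) (hh₁ : 0 < h₁) (hh₂ : 0 < h₂) (hθ : 0 < θ)
    (us vs ws : ℝ) (hus : 0 < us) (hvs : 0 < vs) (hws : 0 < ws)
    (u v w : ℝ → ℝ) (t : ℝ)
    (hu : 0 < u t) (hv : 0 < v t) (hw : 0 < w t) :
    let f₁ : ℝ → ℝ := fun s => γ₁ * s / (1 + γ₁ * h₁ * s)
    let f₂ : ℝ → ℝ := fun s => γ₂ * s / (1 + γ₂ * h₂ * s)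
    let lam₁ := 1 / (γ₁ * h₁)
    let lam₂ := 1 / (γ₂ * h₂)
    let Γ₁ := β₁ / (1 + γ₁ * h₁ * us)
    let Γ₂ := β₂ / (1 + γ₂ * h₂ * vs)
    -- equilibrium relations
    ws = (us / f₁ us) * (1 - us / K₁) →
    ws = (vs / f₂ vs) * (1 - vs / K₂) →
    θ = β₁ * f₁ us + β₂ * f₂ vs →
    -- parameter conditions
    K₁ ≤ lam₁ + us → K₂ ≤ lam₂ + vs →
    -- solution of the system at time t
    HasDerivAt u (u t * (1 - u t / K₁) - w t * f₁ (u t)) t →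
    HasDerivAt v (v t * (1 - v t / K₂) - w t * f₂ (v t)) t →
    HasDerivAt w (w t * (β₁ * f₁ (u t) + β₂ * f₂ (v t) - θ)) t →
    deriv (fun s => Γ₁ * (u s - us - us * Real.log (u s / us))
        + Γ₂ * (v s - vs - vs * Real.log (v s / vs))
        + (w s - ws - ws * Real.log (w s / ws))) t
      ≤ -(Γ₁ * h₁ / K₁) * f₁ (u t) * (u t - us)^2
        - (Γ₂ * h₂ / K₂) * f₂ (v t) * (v t - vs)^2 := by
  intro f₁ f₂ lam₁ lam₂ Γ₁ Γ₂ hws1 hws2 hθeq hc1 hc2 hu' hv' hw'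
  have hds₁ : (0:ℝ) < 1 + γ₁*h₁*us := by positivity
  have hds₂ : (0:ℝ) < 1 + γ₂*h₂*vs := by positivity
  have hd₁ : (0:ℝ) < 1 + γ₁*h₁*(u t) := by positivity
  have hd₂ : (0:ℝ) < 1 + γ₂*h₂*(v t) := by positivity
  -- derivatives of log terms
  have mklog : ∀ (x : ℝ → ℝ) (x' c : ℝ), 0 < x t → 0 < c → HasDerivAt x x' t →
      HasDerivAt (fun s => Real.log (x s / c)) (x' / x t) t := by
    intro x x' c hxt hc hx'
    have h1 : HasDerivAt (fun s => x s / c) (x' / c) t := hx'.div_const c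
    have h2 := (Real.hasDerivAt_log (by positivity : x t / c ≠ 0)).comp t h1
    exact h2.congr_deriv (by rw [inv_div, div_mul_div_comm, mul_comm c x', mul_div_mul_right _ _ hc.ne'])
  have hEu : HasDerivAt (fun s => u s - us - us * Real.log (u s / us))
      ((u t * (1 - u t / K₁) - w t * f₁ (u t)) - us * ((u t * (1 - u t / K₁) - w t * f₁ (u t)) / u t)) t :=
    ((hu'.sub_const us).sub ((mklog u _ us hu hus hu').const_mul us))
  have hEv : HasDerivAt (fun s => v s - vs - vs * Real.log (v s / vs))
      ((v t * (1 - v t / K₂) - w t * f₂ (v t)) - vs * ((v t * (1 - v t / K₂) - w t * f₂ (v t)) / v t)) t :=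
    ((hv'.sub_const vs).sub ((mklog v _ vs hv hvs hv').const_mul vs))
  have hEw : HasDerivAt (fun s => w s - ws - ws * Real.log (w s / ws))
      ((w t * (β₁ * f₁ (u t) + β₂ * f₂ (v t) - θ)) - ws * ((w t * (β₁ * f₁ (u t) + β₂ * f₂ (v t) - θ)) / w t)) t :=
    ((hw'.sub_const ws).sub ((mklog w _ ws hw hws hw').const_mul ws))
  have hE := ((hEu.const_mul Γ₁).add (hEv.const_mul Γ₂)).add hEw
  have hEd := hE.deriv; simp only [Pi.add_def] at hEd; rw [hEd]
  -- equilibrium relations in cleared form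
  have heq1 : ws * γ₁ = (1 + γ₁*h₁*us) * (1 - us/K₁) := by
    unfold f₁ at hws1
    rw [hws1]; field_simp
  have heq2 : ws * γ₂ = (1 + γ₂*h₂*vs) * (1 - vs/K₂) := by
    unfold f₂ at hws2
    rw [hws2]; field_simp
  have key1 : Γ₁ * ((u t - us)/u t) * (u t*(1 - u t/K₁) - w t * f₁ (u t))
      + (w t - ws)*β₁*(f₁ (u t) - f₁ us)
      ≤ -(Γ₁*h₁/K₁) * f₁ (u t) * (u t - us)^2 :=
    one_species K₁ β₁ γ₁ h₁ (u t) us (w t) ws hK₁ hβ₁ hγ₁ hh₁ hu hus heq1 hc1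
  have key2 : Γ₂ * ((v t - vs)/v t) * (v t*(1 - v t/K₂) - w t * f₂ (v t))
      + (w t - ws)*β₂*(f₂ (v t) - f₂ vs)
      ≤ -(Γ₂*h₂/K₂) * f₂ (v t) * (v t - vs)^2 :=
    one_species K₂ β₂ γ₂ h₂ (v t) vs (w t) ws hK₂ hβ₂ hγ₂ hh₂ hv hvs heq2 hc2
  have hDrw : Γ₁ * ((u t * (1 - u t / K₁) - w t * f₁ (u t)) - us * ((u t * (1 - u t / K₁) - w t * f₁ (u t)) / u t))
      + Γ₂ * ((v t * (1 - v t / K₂) - w t * f₂ (v t)) - vs * ((v t * (1 - v t / K₂) - w t * f₂ (v t)) / v t))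
      + ((w t * (β₁ * f₁ (u t) + β₂ * f₂ (v t) - θ)) - ws * ((w t * (β₁ * f₁ (u t) + β₂ * f₂ (v t) - θ)) / w t))
      = (Γ₁ * ((u t - us)/u t) * (u t*(1 - u t/K₁) - w t * f₁ (u t))
          + (w t - ws)*β₁*(f₁ (u t) - f₁ us))
        + (Γ₂ * ((v t - vs)/v t) * (v t*(1 - v t/K₂) - w t * f₂ (v t))
          + (w t - ws)*β₂*(f₂ (v t) - f₂ vs)) := by
    rw [hθeq]
    field_simp
    ring
  rw [hDrw]
  linarith [key1, key2]
end

section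
/- In the symmetric Holling type II case with K₁=K₂=3, β₁=β₂=1, f_i(s)=s/(1+s), and θ ∈ (2/3, 1), the system admits exactly three coexistence equilibria: Q*⁰ = (θ/(2-θ), θ/(2-θ), 4(3-2θ)/(3(2-θ)²)) and Q*^{1,2} = (1 ± 2√((1-θ)/(2-θ)), 1 ∓ 2√((1-θ)/(2-θ)), 4/(3(2-θ))), and all three have positive coordinates. -/
theorem stmt12 (θ : ℝ) (hθ₁ : 2/3 < θ) (hθ₂ : θ < 1) :
    let r := 2 * Real.sqrt ((1 - θ) / (2 - θ))
    let Q0 : ℝ × ℝ × ℝ := (θ / (2 - θ), θ / (2 - θ), 4 * (3 - 2 * θ) / (3 * (2 - θ)^2))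
    let Q1 : ℝ × ℝ × ℝ := (1 + r, 1 - r, 4 / (3 * (2 - θ)))
    let Q2 : ℝ × ℝ × ℝ := (1 - r, 1 + r, 4 / (3 * (2 - θ)))
    (∀ u v w : ℝ,
      (0 < u ∧ 0 < v ∧ 0 < w ∧
        (1 - u / 3) * (1 + u) = w ∧ (1 - v / 3) * (1 + v) = w ∧
        u / (1 + u) + v / (1 + v) = θ)
      ↔ ((u, v, w) = Q0 ∨ (u, v, w) = Q1 ∨ (u, v, w) = Q2)) ∧
    Q0 ≠ Q1 ∧ Q0 ≠ Q2 ∧ Q1 ≠ Q2 ∧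
    (0 < θ / (2 - θ) ∧ 0 < 4 * (3 - 2 * θ) / (3 * (2 - θ)^2)) ∧
    (0 < 1 - r ∧ 0 < 1 + r ∧ 0 < 4 / (3 * (2 - θ))) := by
  intro r Q0 Q1 Q2
  have h2θ : (0:ℝ) < 2 - θ := by linarith
  have hθ0 : (0:ℝ) < θ := by linarith
  have hxpos : (0:ℝ) < (1 - θ) / (2 - θ) := div_pos (by linarith) h2θ
  have hs : Real.sqrt ((1 - θ) / (2 - θ)) ^ 2 = (1 - θ) / (2 - θ) :=
    Real.sq_sqrt hxpos.le
  have hr0 : 0 < r := by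
    have : 0 < Real.sqrt ((1 - θ) / (2 - θ)) := Real.sqrt_pos.mpr hxpos
    simp only [r]; linarith
  have hr2 : r ^ 2 * (2 - θ) = 4 * (1 - θ) := by
    show (2 * Real.sqrt ((1 - θ) / (2 - θ))) ^ 2 * (2 - θ) = 4 * (1 - θ)
    rw [mul_pow, hs]
    field_simp
    ring
  have hr1 : r < 1 := by
    have h1r2 : r ^ 2 < 1 := by nlinarith [hr2]
    nlinarith [h1r2, hr0]
  have h2sq : (0:ℝ) < (2 - θ) ^ 2 := pow_pos h2θ 2
  have hwQ0pos : 0 < 4 * (3 - 2 * θ) / (3 * (2 - θ) ^ 2) :=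
    div_pos (by linarith) (by linarith)
  have hwQ1pos : (0:ℝ) < 4 / (3 * (2 - θ)) := div_pos (by norm_num) (by linarith)
  have htQ0 : 0 < θ / (2 - θ) := div_pos hθ0 h2θ
  have h32 : (3:ℝ) * (2 - θ) ≠ 0 := by positivity
  refine ⟨?_, ?_, ?_, ?_, ⟨htQ0, hwQ0pos⟩, by linarith, by linarith, hwQ1pos⟩
  · intro u v w
    constructor
    · rintro ⟨hu, hv, hw, h1, h2, h3⟩
      have hu1 : (1:ℝ) + u ≠ 0 := by positivity
      have hv1 : (1:ℝ) + v ≠ 0 := by positivity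
      have key : (u - v) * (2 - u - v) = 0 := by linear_combination 3 * h1 - 3 * h2
      rcases mul_eq_zero.mp key with hk | hk
      · -- u = v, symmetric equilibrium Q0
        have huv : u = v := by linarith
        subst huv
        have he : u * (2 - θ) = θ := by
          field_simp at h3
          linear_combination h3
        have hu' : u = θ / (2 - θ) := by
          rw [eq_div_iff h2θ.ne']; exact he
        have hw' : w = 4 * (3 - 2 * θ) / (3 * (2 - θ) ^ 2) := by
          rw [← h1, hu']
          field_simp
          ring
        left
        show (u, u, w) = (θ / (2 - θ), θ / (2 - θ), 4 * (3 - 2 * θ) / (3 * (2 - θ) ^ 2))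
        simp only [Prod.mk.injEq]
        exact ⟨hu', hu', hw'⟩
      · -- u + v = 2
        have hv2 : v = 2 - u := by linarith
        subst hv2
        have hu2 : u < 2 := by linarith
        have h3u : (3:ℝ) - u ≠ 0 := by intro h; linarith
        have heq : (u - 1) ^ 2 * (2 - θ) = 4 * (1 - θ) := by
          have h3' : u / (1 + u) + (2 - u) / (3 - u) = θ := by
            rw [← h3]; ring_nf
          field_simp at h3'
          first
          | linear_combination h3'
          | linear_combination -h3'
          | nlinarith [h3']
        have key2 : (u - 1 - r) * (u - 1 + r) = 0 := by
          have hmul : ((u - 1) ^ 2 - r ^ 2) * (2 - θ) = 0 := by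
            linear_combination heq - hr2
          have h0 : (u - 1) ^ 2 - r ^ 2 = 0 := by
            rcases mul_eq_zero.mp hmul with h | h
            · exact h
            · exact absurd h h2θ.ne'
          linear_combination h0
        have hw' : w = 4 / (3 * (2 - θ)) := by
          rw [← h1, eq_div_iff h32]
          linear_combination -heq
        rcases mul_eq_zero.mp key2 with hk2 | hk2
        · right; left
          show (u, 2 - u, w) = (1 + r, 1 - r, 4 / (3 * (2 - θ)))
          simp only [Prod.mk.injEq]
          exact ⟨by linarith, by linarith, hw'⟩
        · right; right
          show (u, 2 - u, w) = (1 - r, 1 + r, 4 / (3 * (2 - θ)))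
          simp only [Prod.mk.injEq]
          exact ⟨by linarith, by linarith, hw'⟩
    · rintro (h | h | h) <;> simp only [Q0, Q1, Q2, Prod.mk.injEq] at h <;>
        obtain ⟨rfl, rfl, rfl⟩ := h
      · -- Q0
        have hne2 : (1:ℝ) + θ / (2 - θ) ≠ 0 := by positivity
        refine ⟨htQ0, htQ0, hwQ0pos, ?_, ?_, ?_⟩
        · field_simp
          all_goals ring
        · field_simp
          all_goals ring
        · field_simp
          all_goals ring
      · -- Q1
        have h1p : (1:ℝ) + (1 + r) ≠ 0 := by positivity
        have h1m : (1:ℝ) + (1 - r) ≠ 0 := by intro h; linarith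
        refine ⟨by linarith, by linarith, hwQ1pos, ?_, ?_, ?_⟩
        · rw [eq_div_iff h32]
          linear_combination -hr2
        · rw [eq_div_iff h32]
          linear_combination -hr2
        · field_simp
          first
          | linear_combination -hr2
          | linear_combination hr2
          | linear_combination 3 * hr2
          | linear_combination -3 * hr2
          | nlinarith [hr2]
      · -- Q2
        have h1p : (1:ℝ) + (1 + r) ≠ 0 := by positivity
        have h1m : (1:ℝ) + (1 - r) ≠ 0 := by intro h; linarith
        refine ⟨by linarith, by linarith, hwQ1pos, ?_, ?_, ?_⟩
        · rw [eq_div_iff h32]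
          linear_combination -hr2
        · rw [eq_div_iff h32]
          linear_combination -hr2
        · field_simp
          first
          | linear_combination -hr2
          | linear_combination hr2
          | linear_combination 3 * hr2
          | linear_combination -3 * hr2
          | nlinarith [hr2]
  · intro h
    simp only [Q0, Q1, Prod.mk.injEq] at h
    obtain ⟨e1, -, -⟩ := h
    have : θ / (2 - θ) < 1 := (div_lt_one h2θ).mpr (by linarith)
    linarith
  · intro h
    simp only [Q0, Q2, Prod.mk.injEq] at h
    obtain ⟨-, -, e3⟩ := h
    rw [div_eq_div_iff (by linarith) (by linarith)] at e3
    nlinarith [e3]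
  · intro h
    simp only [Q1, Q2, Prod.mk.injEq] at h
    obtain ⟨e1, -, -⟩ := h
    linarith
end

section
/- In the symmetric Holling type II case with K₁=K₂=3, β₁=β₂=1, f_i(s)=s/(1+s), if θ ∈ (0, 2/3] ∪ [1, 3/2), then the only coexistence equilibrium is Q*⁰ = (θ/(2-θ), θ/(2-θ), 4(3-2θ)/(3(2-θ)²)); and if θ ≥ 3/2, no coexistence equilibrium exists. -/
set_option maxHeartbeats 1000000 in
theorem stmt13 (θ : ℝ) :
    let isEq : ℝ → ℝ → ℝ → Prop := fun u v w =>
      0 < u ∧ 0 < v ∧ 0 < w ∧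
      (1 - u / 3) * (1 + u) = w ∧ (1 - v / 3) * (1 + v) = w ∧
      u / (1 + u) + v / (1 + v) = θ
    (((0 < θ ∧ θ ≤ 2/3) ∨ (1 ≤ θ ∧ θ < 3/2)) →
      ∀ u v w : ℝ, isEq u v w ↔
        (u, v, w) = (θ / (2 - θ), θ / (2 - θ), 4 * (3 - 2 * θ) / (3 * (2 - θ)^2))) ∧
    (3/2 ≤ θ → ∀ u v w : ℝ, ¬ isEq u v w) := by
  intro isEq
  constructor
  · rintro hθ u v w
    simp only [Prod.mk.injEq]
    constructor
    · rintro ⟨hu, hv, hw, h1, h2, h3⟩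
      have h1u : (0:ℝ) < 1 + u := by linarith
      have h1v : (0:ℝ) < 1 + v := by linarith
      have h3' : u * (1 + v) + v * (1 + u) = θ * ((1 + u) * (1 + v)) := by
        field_simp at h3
        linarith
      have key : (u - v) * (2 - (u + v)) = 0 := by nlinarith [h1, h2]
      have hθ2 : θ < 2 := by
        rcases hθ with ⟨_, h⟩ | ⟨_, h⟩ <;> linarith
      rcases mul_eq_zero.mp key with h | h
      · -- u = v
        have huv : v = u := by linarith
        subst huv
        have h2u : 2 * v = θ * (1 + v) := by nlinarith [h3']
        have hne : (2:ℝ) - θ ≠ 0 := by linarith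
        have hu' : v = θ / (2 - θ) := by
          rw [eq_div_iff hne]
          linarith [h2u]
        refine ⟨hu', hu', ?_⟩
        rw [hu'] at h1
        field_simp [hne] at h1 ⊢
        linear_combination -h1
      · -- u + v = 2
        have hv2 : v = 2 - u := by linarith
        subst hv2
        have hu2 : u < 2 := by linarith
        have hkey : θ * (3 + 2*u - u^2) = 2 + 4*u - 2*u^2 := by nlinarith [h3']
        have hpos : 0 < 3 + 2*u - u^2 := by nlinarith
        rcases hθ with ⟨hθ0, hθ1⟩ | ⟨hθ0, hθ1⟩
        · exfalso
          nlinarith [mul_pos hu (sub_pos.mpr hu2)]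
        · have hu1 : u = 1 := by nlinarith [sq_nonneg (u - 1)]
          subst hu1
          have hθe : θ = 1 := by nlinarith
          subst hθe
          norm_num
          linarith
    · rintro ⟨hu', hv', hw'⟩
      subst hu'; subst hv'; subst hw'
      have hθ2 : θ < 2 := by
        rcases hθ with ⟨_, h⟩ | ⟨_, h⟩ <;> linarith
      have hθ0 : 0 < θ := by
        rcases hθ with ⟨h, _⟩ | ⟨h, _⟩ <;> linarith
      have h32 : θ < 3/2 := by
        rcases hθ with ⟨_, h⟩ | ⟨_, h⟩ <;> linarith
      have h2θ : (0:ℝ) < 2 - θ := by linarith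
      have h32' : (0:ℝ) < 3 - 2 * θ := by linarith
      refine ⟨by positivity, by positivity, by positivity, ?_, ?_, ?_⟩
      · field_simp
        ring
      · field_simp
        ring
      · have h1u : (0:ℝ) < 1 + θ / (2 - θ) := by positivity
        field_simp
        ring
  · rintro hθ u v w ⟨hu, hv, hw, h1, h2, h3⟩
    have h1u : (0:ℝ) < 1 + u := by linarith
    have h1v : (0:ℝ) < 1 + v := by linarith
    have h3' : u * (1 + v) + v * (1 + u) = θ * ((1 + u) * (1 + v)) := by
      field_simp at h3
      linarith
    have key : (u - v) * (2 - (u + v)) = 0 := by nlinarith [h1, h2]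
    rcases mul_eq_zero.mp key with h | h
    · have huv : v = u := by linarith
      subst huv
      have h2u : 2 * v = θ * (1 + v) := by nlinarith [h3']
      have hh := mul_le_mul_of_nonneg_right hθ h1v.le
      have hu3 : 3 ≤ v := by linarith
      have hh2 := mul_nonneg (by linarith : (0:ℝ) ≤ v/3 - 1) h1v.le
      nlinarith [h1, hh2]
    · have hv2 : v = 2 - u := by linarith
      subst hv2
      have hu2 : u < 2 := by linarith
      have hkey : θ * (3 + 2*u - u^2) = 2 + 4*u - 2*u^2 := by nlinarith [h3']
      have hpos : 0 < 3 + 2*u - u^2 := by nlinarith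
      nlinarith [sq_nonneg (u - 1)]
end

section
/- Define φ₁(γ) = (√((1-γ)(3γ+1)) - (1-γ)(2γ+1))/(2γ²) for γ ∈ (0,1). Then φ₁ is strictly concave on (0,1), φ₁'(2/3) = 0, lim_{γ→0⁺} φ₁(γ) = lim_{γ→1⁻} φ₁(γ) = 0, and 0 < φ₁(γ) ≤ φ₁(2/3) = 1/4 for all γ ∈ (0,1), with equality if and only if γ = 2/3. -/
open Set Filter

noncomputable def F : ℝ → ℝ := fun γ =>
  (Real.sqrt ((1 - γ) * (3 * γ + 1)) - (1 - γ) * (2 * γ + 1)) / (2 * γ^2)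

noncomputable def F1 : ℝ → ℝ := fun γ =>
  (3*γ^2 - 3*γ - 2 + (2+γ) * Real.sqrt ((1 - γ) * (3 * γ + 1))) /
    (2*γ^3 * Real.sqrt ((1 - γ) * (3 * γ + 1)))

noncomputable def F2 : ℝ → ℝ := fun γ =>
  (9*γ^4 - 18*γ^3 - 6*γ^2 + 10*γ + 3
    - (1-γ)*(3*γ+1)*(γ+3) * Real.sqrt ((1 - γ) * (3 * γ + 1))) /
    (γ^4 * (Real.sqrt ((1 - γ) * (3 * γ + 1)))^3)

lemma q_pos {γ : ℝ} (h : γ ∈ Set.Ioo (0:ℝ) 1) : 0 < (1 - γ) * (3 * γ + 1) := by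
  obtain ⟨h1, h2⟩ := h; nlinarith

lemma s_pos {γ : ℝ} (h : γ ∈ Set.Ioo (0:ℝ) 1) :
    0 < Real.sqrt ((1 - γ) * (3 * γ + 1)) := Real.sqrt_pos.2 (q_pos h)

lemma s_sq {γ : ℝ} (h : γ ∈ Set.Ioo (0:ℝ) 1) :
    Real.sqrt ((1 - γ) * (3 * γ + 1)) ^ 2 = (1 - γ) * (3 * γ + 1) :=
  Real.sq_sqrt (q_pos h).le

lemma hasDerivAt_s {γ : ℝ} (h : γ ∈ Set.Ioo (0:ℝ) 1) :
    HasDerivAt (fun x : ℝ => Real.sqrt ((1 - x) * (3 * x + 1)))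
      ((2 - 6*γ) / (2 * Real.sqrt ((1 - γ) * (3 * γ + 1)))) γ := by
  have hinner : HasDerivAt (fun x : ℝ => (1 - x) * (3 * x + 1)) (2 - 6*γ) γ := by
    have := (((hasDerivAt_const γ (1:ℝ)).sub (hasDerivAt_id γ)).mul
      (((hasDerivAt_id γ).const_mul 3).add_const 1))
    refine this.congr_deriv (Eq.symm ?_)
    simp; ring
  exact hinner.sqrt (q_pos h).ne'

lemma hasDerivAt_F {γ : ℝ} (h : γ ∈ Set.Ioo (0:ℝ) 1) : HasDerivAt F (F1 γ) γ := by
  obtain ⟨h1, h2⟩ := h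
  have hsp : 0 < Real.sqrt ((1 - γ) * (3 * γ + 1)) := s_pos ⟨h1, h2⟩
  have hs2 : Real.sqrt ((1 - γ) * (3 * γ + 1)) ^ 2 = (1 - γ) * (3 * γ + 1) := s_sq ⟨h1, h2⟩
  have hp : HasDerivAt (fun x : ℝ => (1 - x) * (2 * x + 1)) (1 - 4*γ) γ := by
    have := (((hasDerivAt_const γ (1:ℝ)).sub (hasDerivAt_id γ)).mul
      (((hasDerivAt_id γ).const_mul 2).add_const 1))
    refine this.congr_deriv (Eq.symm ?_)
    simp; ring
  have hnum := (hasDerivAt_s ⟨h1, h2⟩).sub hp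
  have hden : HasDerivAt (fun x : ℝ => 2 * x^2) (2 * (2*γ^1)) γ :=
    (hasDerivAt_pow 2 γ).const_mul 2
  have hne : 2 * γ^2 ≠ 0 := by positivity
  have hF := hnum.div hden hne
  refine hF.congr_deriv (Eq.symm ?_)
  rw [F1]
  simp only [Pi.sub_apply, Pi.add_apply, Pi.mul_apply, id]
  generalize hg : Real.sqrt ((1 - γ) * (3 * γ + 1)) = s at hs2 hsp ⊢
  have hγ : γ ≠ 0 := ne_of_gt h1
  field_simp
  linear_combination 4 * hs2

lemma hasDerivAt_F1 {γ : ℝ} (h : γ ∈ Set.Ioo (0:ℝ) 1) : HasDerivAt F1 (F2 γ) γ := by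
  obtain ⟨h1, h2⟩ := h
  have hsp : 0 < Real.sqrt ((1 - γ) * (3 * γ + 1)) := s_pos ⟨h1, h2⟩
  have hs2 : Real.sqrt ((1 - γ) * (3 * γ + 1)) ^ 2 = (1 - γ) * (3 * γ + 1) := s_sq ⟨h1, h2⟩
  have hpoly : HasDerivAt (fun x : ℝ => 3*x^2 - 3*x - 2) (3*(2*γ^1) - 3*1) γ :=
    (((hasDerivAt_pow 2 γ).const_mul 3).sub ((hasDerivAt_id γ).const_mul 3)).sub_const 2
  have hmul := ((hasDerivAt_id γ).const_add 2).mul (hasDerivAt_s ⟨h1, h2⟩)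
  have hA := hpoly.add hmul
  have hD := ((hasDerivAt_pow 3 γ).const_mul 2).mul (hasDerivAt_s ⟨h1, h2⟩)
  have hne : 2*γ^3 * Real.sqrt ((1 - γ) * (3 * γ + 1)) ≠ 0 := by positivity
  have hF1 := hA.div hD hne
  refine hF1.congr_deriv (Eq.symm ?_)
  rw [F2]
  simp only [Pi.sub_apply, Pi.add_apply, Pi.mul_apply, id]
  generalize hg : Real.sqrt ((1 - γ) * (3 * γ + 1)) = s at hs2 hsp ⊢
  have hγ : γ ≠ 0 := ne_of_gt h1
  field_simp
  linear_combination (12*γ^2*s + 4*γ^3*s - 12*γ^2 - 12*γ^3 + 6*γ^4) * hs2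

lemma F2_neg {γ : ℝ} (h : γ ∈ Set.Ioo (0:ℝ) 1) : F2 γ < 0 := by
  obtain ⟨h1, h2⟩ := h
  have hsp : 0 < Real.sqrt ((1 - γ) * (3 * γ + 1)) := s_pos ⟨h1, h2⟩
  have hs2 : Real.sqrt ((1 - γ) * (3 * γ + 1)) ^ 2 = (1 - γ) * (3 * γ + 1) := s_sq ⟨h1, h2⟩
  rw [F2]
  generalize hg : Real.sqrt ((1 - γ) * (3 * γ + 1)) = s at hs2 hsp ⊢
  have hc : 0 < (1-γ)*(3*γ+1)*(γ+3) := by nlinarith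
  apply div_neg_of_neg_of_pos
  · rcases le_or_gt (9*γ^4 - 18*γ^3 - 6*γ^2 + 10*γ + 3) 0 with hR|hR
    · nlinarith [mul_pos hc hsp]
    · have hQ : 0 < 6 + 2*γ - 36*γ^2 + 54*γ^3 - 27*γ^4 := by
        nlinarith [sq_nonneg (1-γ), sq_nonneg γ, sq_nonneg (γ*(1-γ)),
          mul_pos h1 (sub_pos.2 h2), sq_nonneg (γ^2*(1-γ))]
      have e : ((1-γ)*(3*γ+1)*(γ+3)*s)^2 = ((1-γ)*(3*γ+1)*(γ+3))^2 * ((1-γ)*(3*γ+1)) := by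
        rw [mul_pow, hs2]
      have hsq : (9*γ^4 - 18*γ^3 - 6*γ^2 + 10*γ + 3)^2 < ((1-γ)*(3*γ+1)*(γ+3)*s)^2 := by
        rw [e]; nlinarith [mul_pos (pow_pos h1 4) hQ]
      nlinarith [mul_pos hc hsp, hsq]
  · exact mul_pos (pow_pos h1 4) (pow_pos hsp 3)

lemma F_concave : StrictConcaveOn ℝ (Set.Ioo (0:ℝ) 1) F := by
  apply strictConcaveOn_of_deriv2_neg (convex_Ioo 0 1)
  · exact fun x hx => ((hasDerivAt_F hx).differentiableAt.continuousAt).continuousWithinAt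
  · intro x hx
    rw [interior_Ioo] at hx
    have hd1 : deriv F =ᶠ[nhds x] F1 := by
      filter_upwards [Ioo_mem_nhds hx.1 hx.2] with y hy
      exact (hasDerivAt_F hy).deriv
    show deriv (deriv F) x < 0
    rw [Filter.EventuallyEq.deriv_eq hd1, (hasDerivAt_F1 hx).deriv]
    exact F2_neg hx

lemma sqrt23 : Real.sqrt ((1 - (2/3:ℝ)) * (3 * (2/3) + 1)) = 1 := by
  rw [show ((1:ℝ) - 2/3) * (3 * (2/3) + 1) = 1 by norm_num, Real.sqrt_one]

lemma F_deriv23 : deriv F (2/3) = 0 := by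
  rw [(hasDerivAt_F (by norm_num : (2/3:ℝ) ∈ Set.Ioo (0:ℝ) 1)).deriv]
  simp only [F1]
  rw [sqrt23]
  norm_num

lemma F_tendsto0 : Filter.Tendsto F (nhdsWithin 0 (Set.Ioi 0)) (nhds 0) := by
  have hc : ContinuousAt (fun γ : ℝ =>
      2*γ*(1-γ) / (Real.sqrt ((1 - γ) * (3 * γ + 1)) + (1 - γ) * (2 * γ + 1))) 0 := by
    apply ContinuousAt.div
    · fun_prop
    · exact ((Real.continuous_sqrt.comp (by continuity)).add (by continuity)).continuousAt
    · norm_num [Real.sqrt_one]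
  have key : Filter.Tendsto (fun γ : ℝ =>
      2*γ*(1-γ) / (Real.sqrt ((1 - γ) * (3 * γ + 1)) + (1 - γ) * (2 * γ + 1)))
      (nhdsWithin 0 (Set.Ioi 0)) (nhds 0) := by
    have := hc.tendsto.mono_left (nhdsWithin_le_nhds (s := Set.Ioi (0:ℝ)))
    convert this using 2
    norm_num [Real.sqrt_one]
  apply key.congr'
  have hmem : Set.Ioo (0:ℝ) 1 ∈ nhdsWithin 0 (Set.Ioi 0) := by
    rw [show Set.Ioo (0:ℝ) 1 = Set.Iio 1 ∩ Set.Ioi 0 by ext x; simp [Set.mem_Ioo, and_comm]]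
    exact Filter.inter_mem (mem_nhdsWithin_of_mem_nhds (Iio_mem_nhds one_pos)) self_mem_nhdsWithin
  filter_upwards [hmem] with γ hγ
  obtain ⟨h1, h2⟩ := hγ
  have hsp : 0 < Real.sqrt ((1 - γ) * (3 * γ + 1)) := s_pos ⟨h1, h2⟩
  have hs2 : Real.sqrt ((1 - γ) * (3 * γ + 1)) ^ 2 = (1 - γ) * (3 * γ + 1) := s_sq ⟨h1, h2⟩
  rw [F]
  rw [div_eq_div_iff
    (ne_of_gt (add_pos hsp (by nlinarith : (0:ℝ) < (1 - γ) * (2 * γ + 1))))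
    (ne_of_gt (mul_pos two_pos (pow_pos h1 2)))]
  linear_combination -hs2

lemma F_tendsto1 : Filter.Tendsto F (nhdsWithin 1 (Set.Iio 1)) (nhds 0) := by
  have hc : ContinuousAt F 1 := by
    apply ContinuousAt.div
    · exact ((Real.continuous_sqrt.comp (by continuity)).sub (by continuity)).continuousAt
    · fun_prop
    · norm_num
  have h10 : F 1 = 0 := by
    simp only [F]
    norm_num
  have := hc.tendsto.mono_left (nhdsWithin_le_nhds (s := Set.Iio (1:ℝ)))
  rwa [h10] at this

lemma F23 : F (2/3) = 1/4 := by
  simp only [F]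
  rw [sqrt23]
  norm_num

lemma F_bounds {γ : ℝ} (h : γ ∈ Set.Ioo (0:ℝ) 1) :
    0 < F γ ∧ F γ ≤ 1/4 ∧ (F γ = 1/4 ↔ γ = 2/3) := by
  obtain ⟨h1, h2⟩ := h
  have hsp : 0 < Real.sqrt ((1 - γ) * (3 * γ + 1)) := s_pos ⟨h1, h2⟩
  have hs2 : Real.sqrt ((1 - γ) * (3 * γ + 1)) ^ 2 = (1 - γ) * (3 * γ + 1) := s_sq ⟨h1, h2⟩
  rw [F]
  generalize hg : Real.sqrt ((1 - γ) * (3 * γ + 1)) = s at hs2 hsp ⊢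
  have hd : (0:ℝ) < 2 * γ^2 := by positivity
  have hp : (0:ℝ) < (1 - γ) * (2 * γ + 1) := by nlinarith
  refine ⟨?_, ?_, ?_⟩
  · apply div_pos _ hd
    have : ((1 - γ) * (2 * γ + 1))^2 < s^2 := by
      nlinarith [mul_pos (pow_pos h1 3) (sub_pos.2 h2)]
    nlinarith
  · rw [div_le_iff₀ hd]
    have : s^2 ≤ ((1 - γ) * (2 * γ + 1) + γ^2/2)^2 := by nlinarith [sq_nonneg (γ*(2-3*γ))]
    nlinarith [add_pos hp (by positivity : (0:ℝ) < γ^2/2)]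
  · constructor
    · intro he
      rw [div_eq_iff (ne_of_gt hd)] at he
      have hse : s = (1 - γ) * (2 * γ + 1) + γ^2/2 := by linarith [he]
      have : γ^2 * (2 - 3*γ)^2 = 0 := by
        have := hs2
        rw [hse] at this
        nlinarith [this]
      have h23 : (2 - 3*γ) = 0 := by
        rcases mul_eq_zero.1 this with hh | hh
        · exact absurd hh (by positivity)
        · exact pow_eq_zero_iff (by norm_num) |>.1 hh
      linarith
    · intro he
      subst he
      rw [show ((1:ℝ) - 2/3) * (3 * (2/3) + 1) = 1 by norm_num] at hg
      rw [Real.sqrt_one] at hg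
      rw [← hg]
      norm_num

theorem stmt14 :
    let φ : ℝ → ℝ := fun γ =>
      (Real.sqrt ((1 - γ) * (3 * γ + 1)) - (1 - γ) * (2 * γ + 1)) / (2 * γ^2)
    StrictConcaveOn ℝ (Set.Ioo (0:ℝ) 1) φ ∧
    deriv φ (2/3) = 0 ∧
    Filter.Tendsto φ (nhdsWithin 0 (Set.Ioi 0)) (nhds 0) ∧
    Filter.Tendsto φ (nhdsWithin 1 (Set.Iio 1)) (nhds 0) ∧
    φ (2/3) = 1/4 ∧
    (∀ γ ∈ Set.Ioo (0:ℝ) 1, 0 < φ γ ∧ φ γ ≤ 1/4 ∧ (φ γ = 1/4 ↔ γ = 2/3)) := by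
  intro φ
  have hφ : φ = F := rfl
  rw [hφ]
  exact ⟨F_concave, F_deriv23, F_tendsto0, F_tendsto1, F23, fun γ hγ => F_bounds hγ⟩
end

section
/- For b > 0 and γ ∈ (0,1), the threshold Θ₁ = φ₁(γ)b with φ₁(γ) = (√((1-γ)(3γ+1)) - (1-γ)(2γ+1))/(2γ²) satisfies 0 < Θ₁ < L₂ = bγ/(1+γ). -/
theorem stmt15 (b γ : ℝ) (hb : 0 < b) (hγ₀ : 0 < γ) (hγ₁ : γ < 1) :
    let Θ₁ := (Real.sqrt ((1 - γ) * (3 * γ + 1)) - (1 - γ) * (2 * γ + 1)) / (2 * γ^2) * b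
    0 < Θ₁ ∧ Θ₁ < b * γ / (1 + γ) := by
  intro Θ₁
  set s := Real.sqrt ((1 - γ) * (3 * γ + 1)) with hs
  have hnn : 0 ≤ (1 - γ) * (3 * γ + 1) := by nlinarith
  have hs2 : s ^ 2 = (1 - γ) * (3 * γ + 1) := Real.sq_sqrt hnn
  have hs0 : 0 ≤ s := Real.sqrt_nonneg _
  have hA : (0:ℝ) < (1 - γ) * (2 * γ + 1) := by nlinarith
  have h1 : (1 - γ) * (2 * γ + 1) < s := by nlinarith [mul_pos (mul_pos hγ₀ hγ₀) hγ₀, mul_nonneg hs0 hs0, mul_pos hA hA]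
  have hγ2 : (0:ℝ) < 2 * γ ^ 2 := by positivity
  have h1γ : (0:ℝ) < 1 + γ := by linarith
  constructor
  · have : 0 < (s - (1 - γ) * (2 * γ + 1)) / (2 * γ ^ 2) := by
      apply div_pos <;> linarith
    exact mul_pos this hb
  · have h2 : s * (1 + γ) < (-γ^2 + 2*γ + 1) := by
      nlinarith [sq_nonneg (s * (1 + γ) - (-γ^2 + 2*γ + 1)), sq_nonneg γ, mul_pos hγ₀ hγ₀,
        mul_pos (mul_pos hγ₀ hγ₀) (mul_pos hγ₀ hγ₀)]
    show (s - (1 - γ) * (2 * γ + 1)) / (2 * γ ^ 2) * b < b * γ / (1 + γ)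
    rw [div_mul_eq_mul_div, div_lt_div_iff₀ hγ2 h1γ]
    nlinarith [mul_pos hγ2 hb, mul_pos (mul_pos hγ₀ hγ₀) hγ₀]
end

section
/- Let b > 0, γ ∈ (0,1), 0 < θ ≤ Θ₁ where Θ₁ = φ₁(γ)b, and consider the quadratic φ₂(θ) = γ²θ² + b(1+γ-2γ²)θ + b²γ(γ-1). Then φ₂(θ) ≤ 0, with equality if and only if θ = Θ₁. -/
theorem stmt16 (b γ θ : ℝ) (hb : 0 < b) (hγ₀ : 0 < γ) (hγ₁ : γ < 1)
    (hθ : 0 < θ)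
    (hθΘ : θ ≤ (Real.sqrt ((1 - γ) * (3 * γ + 1)) - (1 - γ) * (2 * γ + 1)) / (2 * γ^2) * b) :
    let Θ₁ := (Real.sqrt ((1 - γ) * (3 * γ + 1)) - (1 - γ) * (2 * γ + 1)) / (2 * γ^2) * b
    γ^2 * θ^2 + b * (1 + γ - 2 * γ^2) * θ + b^2 * γ * (γ - 1) ≤ 0 ∧
    (γ^2 * θ^2 + b * (1 + γ - 2 * γ^2) * θ + b^2 * γ * (γ - 1) = 0 ↔ θ = Θ₁) := by
  intro Θ₁
  set s := Real.sqrt ((1 - γ) * (3 * γ + 1)) with hs_def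
  have hγ2 : (0:ℝ) < γ^2 := by positivity
  have hsnn : 0 ≤ s := Real.sqrt_nonneg _
  have hs2 : s^2 = (1 - γ) * (3 * γ + 1) := by
    rw [hs_def, Real.sq_sqrt]; nlinarith
  set Θ₂ : ℝ := (-s - (1 - γ) * (2 * γ + 1)) / (2 * γ^2) * b with hΘ₂_def
  have hΘ₂neg : Θ₂ < 0 := by
    apply mul_neg_of_neg_of_pos _ hb
    apply div_neg_of_neg_of_pos _ (by positivity)
    nlinarith
  have hfac : γ^2 * θ^2 + b * (1 + γ - 2 * γ^2) * θ + b^2 * γ * (γ - 1)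
      = γ^2 * (θ - Θ₁) * (θ - Θ₂) := by
    have hγne : γ ≠ 0 := ne_of_gt hγ₀
    rw [hΘ₂_def]
    show _ = γ^2 * (θ - (s - (1 - γ) * (2 * γ + 1)) / (2 * γ^2) * b) * _
    field_simp
    linear_combination (b^2) * hs2
  have hΘ₁eq : Θ₁ = (s - (1 - γ) * (2 * γ + 1)) / (2 * γ^2) * b := rfl
  have h1 : θ - Θ₁ ≤ 0 := by rw [hΘ₁eq]; linarith [hθΘ]
  have h2 : 0 < θ - Θ₂ := by linarith
  constructor
  · rw [hfac]
    have := mul_nonpos_of_nonpos_of_nonneg (mul_nonpos_of_nonneg_of_nonpos (le_of_lt hγ2) h1) (le_of_lt h2)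
    nlinarith
  · rw [hfac]
    constructor
    · intro h
      rcases mul_eq_zero.mp h with h' | h'
      · rcases mul_eq_zero.mp h' with h'' | h''
        · exact absurd h'' (ne_of_gt hγ2)
        · linarith
      · linarith
    · intro h
      rw [h]; ring
end

section
/- For the rescaled asymmetric system with f₁(u) = u/(1+u), f₂(v) = γ₂v/(1+γ₂v), β₁ = β₂ = b > 0, and 0 < γ₂ < 1: the polynomial G(s) = D₄s⁴ + D₃s³ + D₂s² + D₁s + D₀ with coefficients D₄ = γ₂³(2b-θ)², D₃ = γ₂²(2b-θ)(2b(2-γ₂) - θ(3-γ₂)), D₂ = (γ₂-1)γ₂(b²(3γ₂-5) - 2bθ(γ₂-4) - 3θ²), D₁ = b²(4γ₂²-5γ₂+1) - 2bθ(2γ₂²-4γ₂+1) + θ²(1-3γ₂), D₀ = b²(γ₂-1) - 2bθ(γ₂-1) - θ², satisfies D₄ > 0, D₃ > 0 and D₀ < 0 for all θ ∈ (0, L), where L = b/2 + bγ₂/(1+γ₂). -/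
theorem stmt18 (b γ₂ θ : ℝ) (hb : 0 < b) (hγ₀ : 0 < γ₂) (hγ₁ : γ₂ < 1)
    (hθ₀ : 0 < θ) (hθL : θ < b / 2 + b * γ₂ / (1 + γ₂)) :
    let D₄ := γ₂^3 * (2 * b - θ)^2
    let D₃ := γ₂^2 * (2 * b - θ) * (2 * b * (2 - γ₂) - θ * (3 - γ₂))
    let D₀ := b^2 * (γ₂ - 1) - 2 * b * θ * (γ₂ - 1) - θ^2
    0 < D₄ ∧ 0 < D₃ ∧ D₀ < 0 := by
  have h1 : (0:ℝ) < 1 + γ₂ := by linarith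
  have hθb : θ < b := by
    have : b * γ₂ / (1 + γ₂) < b / 2 := by
      rw [div_lt_div_iff₀ h1 two_pos]; nlinarith
    linarith
  have h2 : 0 < 2 * b - θ := by linarith
  have h3 : 0 < 2 * b * (2 - γ₂) - θ * (3 - γ₂) := by nlinarith
  refine ⟨by positivity, by positivity, ?_⟩
  nlinarith [sq_nonneg (θ - b * (1 - γ₂)),
    mul_pos (mul_pos (mul_pos hb hb) hγ₀) (by linarith : (0:ℝ) < 1 - γ₂)]
end
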